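/- For the PDE α u₃u₁₂ + β u₂u₁₃ + γ u₁u₂₃ = 0 with α = a−b, β = b−c, γ = c−a, the vector fields X = ∂₃ − ((λ−b)/(λ−c))(u₃/u₁)∂₁ and Y = ∂₂ − ((λ−b)/(λ−a))(u₂/u₁)∂₁ commute for every λ ∉ {a,c} if and only if u satisfies the PDE, on the region where u₁ ≠ 0. -/

import Mathlib

/-!
Both fields are coordinate fields plus a multiple of `∂₁`, so their bracket is a multiple of `∂₁`.
After clearing the denominator `(λ - a)(λ - c)u₁²` and using the symmetry of second
derivatives, its coefficient is `(λ - b)` times the left-hand side of the PDE. Hence the PDE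
makes the bracket vanish for every `λ`, and conversely a single `λ ∉ {a, b, c}` yields the PDE.
-/

/-- Partial derivative in the `i`-th coordinate direction. -/
noncomputable def pd (i : Fin 3) (f : (Fin 3 → ℝ) → ℝ) (x : Fin 3 → ℝ) : ℝ :=
  fderiv ℝ f x (Pi.single i 1)

/-- Lie bracket of vector fields on `ℝ³`, given by their coefficient functions. -/
noncomputable def lieBracket (X Y : (Fin 3 → ℝ) → Fin 3 → ℝ)
    (x : Fin 3 → ℝ) (i : Fin 3) : ℝ :=
  ∑ j : Fin 3, (X x j * pd j (fun y => Y y i) x - Y x j * pd j (fun y => X y i) x)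

section PartialDerivatives

variable {f g : (Fin 3 → ℝ) → ℝ} {x : Fin 3 → ℝ}

@[simp]
lemma pd_const (i : Fin 3) (k : ℝ) : pd i (fun _ => k) x = 0 := by
  simp [pd]

lemma pd_neg (i : Fin 3) : pd i (fun y => -f y) x = -pd i f x := by
  simp [pd, fderiv_fun_neg]

lemma pd_const_mul (i : Fin 3) (k : ℝ) (hf : DifferentiableAt ℝ f x) :
    pd i (fun y => k * f y) x = k * pd i f x := by
  simp [pd, fderiv_const_mul hf]

lemma pd_div (i : Fin 3) (hf : DifferentiableAt ℝ f x) (hg : DifferentiableAt ℝ g x)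
    (hg0 : g x ≠ 0) :
    pd i (fun y => f y / g y) x = (pd i f x * g x - f x * pd i g x) / g x ^ 2 := by
  have hinv : HasFDerivAt (fun y => (g y)⁻¹) ((-(g x ^ 2)⁻¹) • fderiv ℝ g x) x :=
    (hasDerivAt_inv hg0).comp_hasFDerivAt x hg.hasFDerivAt
  simp only [pd, div_eq_mul_inv]
  rw [(hf.hasFDerivAt.fun_mul hinv).fderiv]
  simp only [add_apply, smul_apply, smul_eq_mul]
  field_simp
  ring

lemma ContDiff.differentiable_pd {u : (Fin 3 → ℝ) → ℝ} (hu : ContDiff ℝ 2 u) (i : Fin 3) :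
    Differentiable ℝ (pd i u) :=
  ((hu.fderiv_right (m := 1) (by norm_num)).clm_apply contDiff_const).differentiable
    one_ne_zero

lemma ContDiff.pd_pd_comm {u : (Fin 3 → ℝ) → ℝ} (hu : ContDiff ℝ 2 u) (i j : Fin 3) :
    pd i (pd j u) x = pd j (pd i u) x := by
  have hdu : Differentiable ℝ (fderiv ℝ u) :=
    (hu.fderiv_right (m := 1) (by norm_num)).differentiable one_ne_zero
  have second : ∀ k m, pd k (pd m u) x =
      fderiv ℝ (fderiv ℝ u) x (Pi.single k 1) (Pi.single m 1) := fun k m => by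
    change fderiv ℝ (fun y => fderiv ℝ u y (Pi.single m 1)) x (Pi.single k 1) = _
    simp [fderiv_clm_apply (hdu x) (differentiableAt_const _)]
  rw [second, second]
  exact hu.contDiffAt.isSymmSndFDerivAt (by simp) _ _

end PartialDerivatives

section CoordinateFields

variable (f g : (Fin 3 → ℝ) → ℝ) (x : Fin 3 → ℝ)

lemma lieBracket_coordFields_zero :
    lieBracket (fun y => ![f y, 0, 1]) (fun y => ![g y, 1, 0]) x 0
      = f x * pd 0 g x + pd 2 g x - (g x * pd 0 f x + pd 1 f x) := by
  simp [lieBracket, Fin.sum_univ_three]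

lemma lieBracket_coordFields_of_ne_zero {i : Fin 3} (hi : i ≠ 0) :
    lieBracket (fun y => ![f y, 0, 1]) (fun y => ![g y, 1, 0]) x i = 0 := by
  fin_cases i
  · exact absurd rfl hi
  all_goals simp [lieBracket]

end CoordinateFields

lemma lieBracket_laxPair_zero {a b c l : ℝ} (hla : l ≠ a) (hlc : l ≠ c)
    {u : (Fin 3 → ℝ) → ℝ} (hu : ContDiff ℝ 2 u) {x : Fin 3 → ℝ} (hu1 : pd 0 u x ≠ 0) :
    (l - a) * (l - c) * pd 0 u x ^ 2 *
      lieBracket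
        (fun x => ![-((l - b) / (l - c) * (pd 2 u x / pd 0 u x)), 0, 1])
        (fun x => ![-((l - b) / (l - a) * (pd 1 u x / pd 0 u x)), 1, 0])
        x 0
      = (l - b) * ((a - b) * pd 2 u x * pd 0 (pd 1 u) x
          + (b - c) * pd 1 u x * pd 0 (pd 2 u) x
          + (c - a) * pd 0 u x * pd 1 (pd 2 u) x) := by
  have hla' : l - a ≠ 0 := sub_ne_zero.mpr hla
  have hlc' : l - c ≠ 0 := sub_ne_zero.mpr hlc
  have hdiff : ∀ i, DifferentiableAt ℝ (pd i u) x := fun i => hu.differentiable_pd i x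
  have hquot : ∀ i, DifferentiableAt ℝ (fun y => pd i u y / pd 0 u y) x := fun i => by
    simpa only [div_eq_mul_inv] using (hdiff i).fun_mul ((hdiff 0).fun_inv hu1)
  simp only [lieBracket_coordFields_zero, pd_neg, pd_const_mul _ _ (hquot _),
    pd_div _ (hdiff _) (hdiff 0) hu1, hu.pd_pd_comm 1 0, hu.pd_pd_comm 2 0, hu.pd_pd_comm 2 1]
  field_simp
  ring

theorem lax_pair_11_11_11_general
    (a b c : ℝ)
    (u : (Fin 3 → ℝ) → ℝ) (hu : ContDiff ℝ 2 u)
    (hu1 : ∀ x, pd 0 u x ≠ 0) :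
    (∀ l : ℝ, l ≠ a → l ≠ c → ∀ x, ∀ i : Fin 3,
      lieBracket
        (fun x => ![-((l - b) / (l - c) * (pd 2 u x / pd 0 u x)), 0, 1])
        (fun x => ![-((l - b) / (l - a) * (pd 1 u x / pd 0 u x)), 1, 0])
        x i = 0) ↔
    (∀ x, (a - b) * pd 2 u x * pd 0 (pd 1 u) x
        + (b - c) * pd 1 u x * pd 0 (pd 2 u) x
        + (c - a) * pd 0 u x * pd 1 (pd 2 u) x = 0) := by
  constructor
  · intro hcomm x
    obtain ⟨l, hl⟩ := Infinite.exists_notMem_finset ({a, b, c} : Finset ℝ)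
    simp only [Finset.mem_insert, Finset.mem_singleton, not_or] at hl
    obtain ⟨hla, hlb, hlc⟩ := hl
    have key := lieBracket_laxPair_zero (b := b) hla hlc hu (hu1 x)
    rw [hcomm l hla hlc x 0, mul_zero, eq_comm] at key
    exact (mul_eq_zero.mp key).resolve_left (sub_ne_zero.mpr hlb)
  · intro hpde l hla hlc x i
    rcases eq_or_ne i 0 with rfl | hi
    · have key := lieBracket_laxPair_zero (b := b) hla hlc hu (hu1 x)
      rw [hpde x, mul_zero] at key
      refine (mul_eq_zero.mp key).resolve_left ?_
      exact mul_ne_zero (mul_ne_zero (sub_ne_zero.mpr hla) (sub_ne_zero.mpr hlc))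
        (pow_ne_zero 2 (hu1 x))
    · exact lieBracket_coordFields_of_ne_zero _ _ x hi

/-- For the PDE `α u₃u₁₂ + β u₂u₁₃ + γ u₁u₂₃ = 0` with `α = a−b`, `β = b−c`,
`γ = c−a`, the vector fields `X = ∂₃ − ((λ−b)/(λ−c))(u₃/u₁)∂₁` and
`Y = ∂₂ − ((λ−b)/(λ−a))(u₂/u₁)∂₁` commute for every `λ ∉ {a, c}` iff `u`
satisfies the PDE, on the region `u₁ ≠ 0`. -/
theorem lax_pair_11_11_11
    (a b c : ℝ) (hab : a ≠ b) (hbc : b ≠ c) (hac : a ≠ c)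
    (u : (Fin 3 → ℝ) → ℝ) (hu : ContDiff ℝ 2 u)
    (hu1 : ∀ x, pd 0 u x ≠ 0) :
    (∀ l : ℝ, l ≠ a → l ≠ c → ∀ x, ∀ i : Fin 3,
      lieBracket
        (fun x => ![-((l - b) / (l - c) * (pd 2 u x / pd 0 u x)), 0, 1])
        (fun x => ![-((l - b) / (l - a) * (pd 1 u x / pd 0 u x)), 1, 0])
        x i = 0) ↔
    (∀ x, (a - b) * pd 2 u x * pd 0 (pd 1 u) x
        + (b - c) * pd 1 u x * pd 0 (pd 2 u) x
        + (c - a) * pd 0 u x * pd 1 (pd 2 u) x = 0) :=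
  lax_pair_11_11_11_general a b c u hu hu1
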